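/- Let R = ℤ/4ℤ and let y = x·(-x + 1). The center of the group G(R) of automorphisms of R[x] is exactly the set of automorphisms α_f with α_f(x) = x + f, where f ranges over the nilpotent elements of R[x] that belong to the subalgebra R[y]. -/

import Mathlib

/-!
Every automorphism `σ` acts by substitution `p ↦ p(σ x)`, and modulo 2 it becomes `x ↦ x + b`.
A central `σ` commutes with `x ↦ x + 1` and with `x ↦ -x`. The second forces `b = 0`, so
`σ x = x + f` with `f ∈ 2R[x]`; the first makes `f` invariant under `x ↦ x + 1`, which modulo 2
says that `f / 2` lies in `𝔽₂[x² + x]`, the reduction of `R[y]`. Conversely such an `f` has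
`f² = 0`, so Taylor's formula gives `(τ x)(x + f) = τ x + (τ x)' f`; this equals `f(τ x)` because
only `τ x mod 2 = x + b` matters for multiples of 2, and `x² + x` is invariant under `x ↦ x + b`.
-/

open Polynomial

namespace Polynomial

section CommSemiring

variable {R : Type*} [CommSemiring R]

theorem ofNat_mul_comp (n : ℕ) [n.AtLeastTwo] (p q : R[X]) :
    (ofNat(n) * p).comp q = ofNat(n) * p.comp q := by
  rw [mul_comp, ofNat_comp]
  rfl

theorem algEquiv_apply_eq_comp (e : R[X] ≃ₐ[R] R[X]) (p : R[X]) : e p = p.comp (e X) := by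
  conv_lhs => rw [← aeval_X_left_apply p]
  rw [← AlgEquiv.coe_toAlgHom, ← aeval_algHom_apply, comp_eq_aeval]

theorem algEquiv_mul_eq_mul_iff (σ τ : R[X] ≃ₐ[R] R[X]) :
    σ * τ = τ * σ ↔ (τ X).comp (σ X) = (σ X).comp (τ X) := by
  have hX : (σ * τ) X = (τ X).comp (σ X) ∧ (τ * σ) X = (σ X).comp (τ X) := by
    simp only [AlgEquiv.mul_apply]
    exact ⟨algEquiv_apply_eq_comp σ _, algEquiv_apply_eq_comp τ _⟩
  rw [← hX.1, ← hX.2]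
  exact ⟨fun h ↦ congr($h X), fun h ↦ AlgEquiv.coe_toAlgHom_injective (algHom_ext h)⟩

theorem algEquiv_symm_X_comp (e : R[X] ≃ₐ[R] R[X]) : (e.symm X).comp (e X) = X := by
  rw [← algEquiv_apply_eq_comp, AlgEquiv.apply_symm_apply]

theorem mem_adjoin_singleton_iff_exists_comp {f g : R[X]} :
    f ∈ Algebra.adjoin R {g} ↔ ∃ q : R[X], q.comp g = f := by
  simp [Algebra.adjoin_singleton_eq_range_aeval, comp_eq_aeval]

theorem natDegree_eq_one_of_comp_eq_X [NoZeroDivisors R] [Nontrivial R] {u t : R[X]}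
    (h : u.comp t = X) : t.natDegree = 1 :=
  Nat.eq_one_of_mul_eq_one_left (by rw [← natDegree_comp, h, natDegree_X])

theorem natDegree_sq_add_X [Nontrivial R] : (X ^ 2 + X : R[X]).natDegree = 2 := by
  rw [natDegree_add_eq_left_of_natDegree_lt] <;> simp

end CommSemiring

theorem exists_eq_comp_add_X_mul_comp {R : Type*} [CommRing R] {w : R[X]} (hw : w.Monic)
    (hdeg : w.natDegree = 2) (p : R[X]) :
    ∃ q₀ q₁ : R[X], p = q₀.comp w + X * q₁.comp w := by
  by_cases hp : p.natDegree ≤ 1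
  · refine ⟨C (p.coeff 0), C (p.coeff 1), ?_⟩
    rw [C_comp, C_comp]
    nth_rewrite 1 [eq_X_add_C_of_natDegree_le_one hp]
    ring
  have hw1 : w ≠ 1 := fun h ↦ by simp [h] at hdeg
  have hlt : (p /ₘ w).natDegree < p.natDegree := by
    rw [natDegree_divByMonic p hw, hdeg]
    omega
  obtain ⟨q₀, q₁, hq⟩ := exists_eq_comp_add_X_mul_comp hw hdeg (p /ₘ w)
  have hr : (p %ₘ w).natDegree ≤ 1 := by
    have := natDegree_modByMonic_lt p hw hw1
    omega
  refine ⟨X * q₀ + C ((p %ₘ w).coeff 0), X * q₁ + C ((p %ₘ w).coeff 1), ?_⟩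
  nth_rewrite 1 [← modByMonic_add_div p w, hq, eq_X_add_C_of_natDegree_le_one hr]
  simp only [add_comp, mul_comp, X_comp, C_comp]
  ring
termination_by p.natDegree

theorem comp_X_add_of_sq_eq_zero {R : Type*} [CommRing R] (t : R[X]) {f : R[X]} (hf : f ^ 2 = 0) :
    t.comp (X + f) = t + derivative t * f := by
  rw [comp_eq_aeval, aeval_add_of_sq_eq_zero t X f hf, aeval_X_left_apply, aeval_X_left_apply]

section CharTwo

variable {R : Type*} [CommRing R] [CharP R 2]

theorem sq_add_X_comp_X_add_one : (X ^ 2 + X : R[X]).comp (X + 1) = X ^ 2 + X := by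
  have h2 : (2 : R[X]) = 0 := CharTwo.two_eq_zero
  simp only [add_comp, pow_comp, X_comp]
  linear_combination (X + 1 : R[X]) * h2

theorem exists_eq_comp_sq_add_X_of_comp_X_add_one_eq [IsDomain R] {p : R[X]}
    (h : p.comp (X + 1) = p) : ∃ q : R[X], p = q.comp (X ^ 2 + X) := by
  have hmonic : (X ^ 2 + X : R[X]).Monic := monic_X_pow_add (by rw [degree_X]; norm_num)
  obtain ⟨q₀, q₁, rfl⟩ := exists_eq_comp_add_X_mul_comp hmonic natDegree_sq_add_X p
  rw [add_comp, mul_comp, X_comp, comp_assoc, comp_assoc, sq_add_X_comp_X_add_one] at h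
  have hq₁ : q₁.comp (X ^ 2 + X) = 0 := by linear_combination h
  rcases comp_eq_zero_iff.mp hq₁ with hq₁ | ⟨-, hC⟩
  · exact ⟨q₀, by rw [hq₁, zero_comp, mul_zero, add_zero]⟩
  · simpa [natDegree_sq_add_X] using congr(natDegree $hC)

end CharTwo

theorem eq_X_add_C_of_natDegree_eq_one {t : (ZMod 2)[X]} (ht : t.natDegree = 1) :
    t = X + C (t.coeff 0) := by
  have hne : t.coeff 1 ≠ 0 := by
    rw [← ht]
    exact leadingCoeff_ne_zero.2 (ne_zero_of_natDegree_gt (n := 0) (by omega))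
  have hlead : t.coeff 1 = 1 := (by decide : ∀ c : ZMod 2, c ≠ 0 → c = 1) _ hne
  conv_lhs => rw [eq_X_add_C_of_natDegree_le_one ht.le, hlead, C_1, one_mul]

theorem sq_add_X_comp_X_add_C (b : ZMod 2) :
    (X ^ 2 + X : (ZMod 2)[X]).comp (X + C b) = X ^ 2 + X := by
  rcases (by decide : ∀ c : ZMod 2, c = 0 ∨ c = 1) b with rfl | rfl
  · simp
  · simpa using sq_add_X_comp_X_add_one (R := ZMod 2)

end Polynomial

namespace ZModFour

def reduceModTwo : ZMod 4 →+* ZMod 2 := ZMod.castHom (by norm_num) (ZMod 2)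

theorem two_dvd_iff_map_eq_zero (p : (ZMod 4)[X]) : 2 ∣ p ↔ p.map reduceModTwo = 0 := by
  have hcoeff : ∀ c : ZMod 4, reduceModTwo c = 0 ↔ ∃ d, c = 2 * d := by decide
  rw [← C_ofNat, C_dvd_iff_dvd_coeff]
  simp only [Polynomial.ext_iff, coeff_map, coeff_zero, hcoeff, Dvd.dvd]

theorem two_mul_eq_zero_iff (p : (ZMod 4)[X]) : 2 * p = 0 ↔ p.map reduceModTwo = 0 := by
  have hcoeff : ∀ c : ZMod 4, 2 * c = 0 ↔ reduceModTwo c = 0 := by decide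
  simp only [← C_ofNat, Polynomial.ext_iff, coeff_C_mul, coeff_map, coeff_zero, hcoeff]

theorem two_mul_eq_two_mul_iff (p q : (ZMod 4)[X]) :
    2 * p = 2 * q ↔ p.map reduceModTwo = q.map reduceModTwo := by
  rw [← sub_eq_zero, ← mul_sub, two_mul_eq_zero_iff, Polynomial.map_sub, sub_eq_zero]

theorem sq_eq_zero_of_two_dvd {f : (ZMod 4)[X]} (hf : 2 ∣ f) : f ^ 2 = 0 := by
  obtain ⟨g, rfl⟩ := hf
  have h4 : (2 : (ZMod 4)[X]) ^ 2 = 0 := by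
    rw [sq, ← C_ofNat, ← C_mul]
    exact C_eq_zero.2 (by decide)
  rw [mul_pow, h4, zero_mul]

theorem isNilpotent_iff_two_dvd (f : (ZMod 4)[X]) : IsNilpotent f ↔ 2 ∣ f :=
  ⟨fun hf ↦ (two_dvd_iff_map_eq_zero f).2 (hf.map (mapRingHom reduceModTwo)).eq_zero,
    fun hf ↦ ⟨2, sq_eq_zero_of_two_dvd hf⟩⟩

theorem map_X_mul_neg_X_add_one :
    (X * (-X + 1) : (ZMod 4)[X]).map reduceModTwo = X ^ 2 + X := by
  have h2 : (2 : (ZMod 2)[X]) = 0 := CharTwo.two_eq_zero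
  simp only [Polynomial.map_mul, Polynomial.map_add, Polynomial.map_neg, map_X, Polynomial.map_one]
  linear_combination (-X ^ 2 : (ZMod 2)[X]) * h2

theorem exists_map_algEquiv_X_eq_X_add_C (τ : (ZMod 4)[X] ≃ₐ[ZMod 4] (ZMod 4)[X]) :
    ∃ b : ZMod 2, (τ X).map reduceModTwo = X + C b := by
  have hinv : ((τ.symm X).map reduceModTwo).comp ((τ X).map reduceModTwo) = X := by
    rw [← Polynomial.map_comp, algEquiv_symm_X_comp, map_X]
  exact ⟨_, eq_X_add_C_of_natDegree_eq_one (natDegree_eq_one_of_comp_eq_X hinv)⟩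

theorem isNilpotent_and_mem_adjoin_iff (f : (ZMod 4)[X]) :
    IsNilpotent f ∧ f ∈ Algebra.adjoin (ZMod 4) {X * (-X + 1)} ↔
      ∃ k : (ZMod 4)[X], f = 2 * k.comp (X * (-X + 1)) := by
  rw [isNilpotent_iff_two_dvd, mem_adjoin_singleton_iff_exists_comp]
  constructor
  · rintro ⟨hf, q, rfl⟩
    have hq : (q.map reduceModTwo).comp (X ^ 2 + X) = 0 := by
      rw [← map_X_mul_neg_X_add_one, ← Polynomial.map_comp, ← two_dvd_iff_map_eq_zero]
      exact hf
    obtain ⟨k, rfl⟩ : 2 ∣ q := by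
      rcases comp_eq_zero_iff.mp hq with hq | ⟨-, hC⟩
      · exact (two_dvd_iff_map_eq_zero q).2 hq
      · simpa [natDegree_sq_add_X] using congr(natDegree $hC)
    exact ⟨k, by rw [ofNat_mul_comp]⟩
  · rintro ⟨k, rfl⟩
    exact ⟨dvd_mul_right _ _, 2 * k, by rw [ofNat_mul_comp]⟩

theorem exists_eq_two_mul_comp_of_comp_X_add_one_eq {f : (ZMod 4)[X]} (hf2 : 2 ∣ f)
    (hf : f.comp (X + 1) = f) : ∃ k : (ZMod 4)[X], f = 2 * k.comp (X * (-X + 1)) := by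
  obtain ⟨g, rfl⟩ := hf2
  have hg : (g.map reduceModTwo).comp (X + 1) = g.map reduceModTwo := by
    rw [ofNat_mul_comp, two_mul_eq_two_mul_iff, Polynomial.map_comp] at hf
    simpa using hf
  obtain ⟨q, hq⟩ := exists_eq_comp_sq_add_X_of_comp_X_add_one_eq hg
  obtain ⟨k, rfl⟩ := map_surjective _ (ZMod.ringHom_surjective reduceModTwo) q
  refine ⟨k, (two_mul_eq_two_mul_iff _ _).2 ?_⟩
  rw [hq, Polynomial.map_comp, map_X_mul_neg_X_add_one]

theorem reduceModTwo_coeff_zero_eq_zero_of_comp_neg_X {t : (ZMod 4)[X]} (ht : t.comp (-X) = -t) :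
    reduceModTwo (t.coeff 0) = 0 := by
  have h0 : t.coeff 0 = -t.coeff 0 := by
    simpa [coeff_zero_eq_eval_zero, eval_comp] using congr(eval 0 $ht)
  exact (by decide : ∀ c : ZMod 4, c = -c → reduceModTwo c = 0) _ h0

theorem exists_eq_X_add_two_mul_comp_of_mem_center {σ : (ZMod 4)[X] ≃ₐ[ZMod 4] (ZMod 4)[X]}
    (hσ : σ ∈ Subgroup.center ((ZMod 4)[X] ≃ₐ[ZMod 4] (ZMod 4)[X])) :
    ∃ k : (ZMod 4)[X], σ X = X + 2 * k.comp (X * (-X + 1)) := by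
  have hcomm (τ : (ZMod 4)[X] ≃ₐ[ZMod 4] (ZMod 4)[X]) : (σ X).comp (τ X) = (τ X).comp (σ X) :=
    (algEquiv_mul_eq_mul_iff τ σ).1 (Subgroup.mem_center_iff.1 hσ τ)
  have hshift : (σ X).comp (X + 1) = σ X + 1 := by
    simpa using hcomm (algEquivAevalXAddC 1)
  have hneg : (σ X).comp (-X) = -σ X := by
    simpa using hcomm algEquivAevalNegX
  obtain ⟨b, hb⟩ := exists_map_algEquiv_X_eq_X_add_C σ
  have hb0 : b = 0 := by
    simpa [← coeff_map, hb] using reduceModTwo_coeff_zero_eq_zero_of_comp_neg_X hneg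
  refine (exists_eq_two_mul_comp_of_comp_X_add_one_eq (f := σ X - X) ?_ ?_).imp fun k hk ↦ ?_
  · rw [two_dvd_iff_map_eq_zero, Polynomial.map_sub, hb, hb0, map_X, C_0, add_zero, sub_self]
  · rw [sub_comp, hshift, X_comp]
    ring
  · rw [← hk]
    ring

theorem X_add_two_mul_comp_comp_comm (τ : (ZMod 4)[X] ≃ₐ[ZMod 4] (ZMod 4)[X]) (k : (ZMod 4)[X]) :
    (X + 2 * k.comp (X * (-X + 1))).comp (τ X) = (τ X).comp (X + 2 * k.comp (X * (-X + 1))) := by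
  obtain ⟨b, hb⟩ := exists_map_algEquiv_X_eq_X_add_C τ
  rw [comp_X_add_of_sq_eq_zero _ (sq_eq_zero_of_two_dvd (dvd_mul_right _ _)), add_comp, X_comp,
    ofNat_mul_comp, mul_left_comm, add_right_inj, two_mul_eq_two_mul_iff]
  rw [Polynomial.map_mul, ← derivative_map, comp_assoc, Polynomial.map_comp, Polynomial.map_comp,
    Polynomial.map_comp, map_X_mul_neg_X_add_one, hb, sq_add_X_comp_X_add_C]
  simp

end ZModFour

open ZModFour in
/-- Theorem: over `R = ℤ/4ℤ`, the center of the group `G(R)` of automorphisms of `R[x]`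
consists exactly of the automorphisms `α_f : x ↦ x + f` with `f` a nilpotent element of
`R[x]` belonging to `R[y]`, where `y = x·(-x+1)`. -/
theorem zmod4_center_of_automorphism_group :
    (Subgroup.center ((ZMod 4)[X] ≃ₐ[ZMod 4] (ZMod 4)[X]) :
        Set ((ZMod 4)[X] ≃ₐ[ZMod 4] (ZMod 4)[X])) =
      {σ : (ZMod 4)[X] ≃ₐ[ZMod 4] (ZMod 4)[X] |
        ∃ f : (ZMod 4)[X], IsNilpotent f ∧
          f ∈ Algebra.adjoin (ZMod 4) ({X * (-X + 1)} : Set ((ZMod 4)[X])) ∧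
          σ X = X + f} := by
  ext σ
  simp only [SetLike.mem_coe, Set.mem_ofPred_eq]
  constructor
  · intro hσ
    obtain ⟨k, hk⟩ := exists_eq_X_add_two_mul_comp_of_mem_center hσ
    obtain ⟨hnil, hadj⟩ := (isNilpotent_and_mem_adjoin_iff _).2 ⟨k, rfl⟩
    exact ⟨_, hnil, hadj, hk⟩
  · rintro ⟨f, hnil, hadj, hσX⟩
    obtain ⟨k, rfl⟩ := (isNilpotent_and_mem_adjoin_iff f).1 ⟨hnil, hadj⟩
    refine Subgroup.mem_center_iff.2 fun τ ↦ (algEquiv_mul_eq_mul_iff τ σ).2 ?_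
    rw [hσX]
    exact X_add_two_mul_comp_comp_comm τ k
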